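/- arXiv:1306.0066 — 5 statements merged into one kernel-verified Lean document; each statement's English description precedes it below -/
import Mathlib

section
/- The identity axiom for equidistance (IE), the axiom of segment construction (SC), the identity axiom for betweenness (IB: Btw a b a implies a = b), and the axiom of Pasch (Pa) together imply symmetry of betweenness: for all a,b,c, Btw a b c implies Btw c b a. -/
theorem stmt_3 (P : Type*) (Btw : P → P → P → Prop) (Cong : P → P → P → P → Prop)
    (hIE : ∀ a b c, Cong a b c c → a = b)
    (hSC : ∀ a b c q : P, ∃ x, Btw q a x ∧ Cong a x b c)
    (hIB : ∀ a b, Btw a b a → a = b)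
    (hPa : ∀ a b c p q, Btw a p c → Btw b q c → ∃ x, Btw p x b ∧ Btw q x a) :
    ∀ a b c : P, Btw a b c → Btw c b a := by
  intro a b c habc
  obtain ⟨x, hbx, hcx⟩ := hSC c c c b
  have hx : c = x := hIE c x c hcx
  have hbcc : Btw b c c := hx ▸ hbx
  obtain ⟨y, hby, hcy⟩ := hPa a b c b c habc hbcc
  have : b = y := hIB b y hby
  exact this ▸ hcy
end

section
/- The axiom set A' — consisting of the transitivity axiom for equidistance (TE), the identity axiom for equidistance (IE), the axiom of segment construction (SC), the modified five-segments axiom (FS'), the identity axiom for betweenness (IB), and the axiom of Pasch (Pa) — implies the reflexivity axiom for equidistance: for all a b, Cong a b b a. -/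
theorem stmt_4 (P : Type*) (Btw : P → P → P → Prop) (Cong : P → P → P → P → Prop)
    (hTE : ∀ a b p q r s, Cong a b p q → Cong a b r s → Cong p q r s)
    (hIE : ∀ a b c, Cong a b c c → a = b)
    (hSC : ∀ a b c q : P, ∃ x, Btw q a x ∧ Cong a x b c)
    (hFS' : ∀ a b c d a' b' c' d', a ≠ b → Btw a b c → Btw a' b' c' →
      Cong a b a' b' → Cong b c b' c' → Cong a d a' d' → Cong b d b' d' →
      Cong d c c' d')
    (hIB : ∀ a b, Btw a b a → a = b)
    (hPa : ∀ a b c p q, Btw a p c → Btw b q c → ∃ x, Btw p x b ∧ Btw q x a) :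
    ∀ a b : P, Cong a b b a := by
  -- Cong reflexivity: Cong a b a b
  have hrefl : ∀ a b : P, Cong a b a b := by
    intro a b
    obtain ⟨x, _, hc⟩ := hSC b a b a
    exact hTE b x a b a b hc hc
  -- trivial betweenness: Btw q a a
  have hbtriv : ∀ q a : P, Btw q a a := by
    intro q a
    obtain ⟨x, hb, hc⟩ := hSC a q q q
    have := hIE a x q hc
    subst this
    exact hb
  -- betweenness symmetry
  have hbsym : ∀ a b c : P, Btw a b c → Btw c b a := by
    intro a b c h
    obtain ⟨x, hx1, hx2⟩ := hPa a b c b c h (hbtriv b c)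
    have : x = b := (hIB b x hx1).symm
    rwa [this] at hx2
  -- pseudo-reflexivity: Cong b c c b
  have key : ∀ b c : P, Cong b c c b := by
    intro b c
    by_cases hbc : b = c
    · subst hbc; exact hrefl b b
    · obtain ⟨x, hb, hc⟩ := hSC b c b c
      have hxb : x ≠ b := by
        intro h; rw [h] at hc
        have h1 : Cong c b b b := hTE b b c b b b hc (hrefl b b)
        exact hbc (hIE c b b h1).symm
      have hx2 : Btw x b c := hbsym c b x hb
      exact hFS' x b c b x b c b hxb hx2 hx2 (hrefl x b) (hrefl b c)
        (hrefl x b) (hrefl b b)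
  intro a b
  exact key a b
end

section
/- The axiom set A' (TE, IE, SC, FS', IB, Pa) implies the original five-segments axiom (FS). -/
theorem stmt_6 (P : Type*) (Btw : P → P → P → Prop) (Cong : P → P → P → P → Prop)
    (hTE : ∀ a b p q r s, Cong a b p q → Cong a b r s → Cong p q r s)
    (hIE : ∀ a b c, Cong a b c c → a = b)
    (hSC : ∀ a b c q : P, ∃ x, Btw q a x ∧ Cong a x b c)
    (hFS' : ∀ a b c d a' b' c' d', a ≠ b → Btw a b c → Btw a' b' c' →
      Cong a b a' b' → Cong b c b' c' → Cong a d a' d' → Cong b d b' d' →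
      Cong d c c' d')
    (hIB : ∀ a b, Btw a b a → a = b)
    (hPa : ∀ a b c p q, Btw a p c → Btw b q c → ∃ x, Btw p x b ∧ Btw q x a) :
    ∀ a b c d a' b' c' d' : P, a ≠ b → Btw a b c → Btw a' b' c' →
      Cong a b a' b' → Cong b c b' c' → Cong a d a' d' → Cong b d b' d' →
      Cong c d c' d' := by
  intro a b c d a' b' c' d' hab h1 h2 h3 h4 h5 h6
  have refl : ∀ p q : P, Cong p q p q := by
    intro p q
    obtain ⟨x, -, hx⟩ := hSC p p q p
    exact hTE p x p q p q hx hx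
  have hdc : Cong d c c' d' := hFS' a b c d a' b' c' d' hab h1 h2 h3 h4 h5 h6
  have hswap : Cong d c c d :=
    hFS' a b c d a b c d hab h1 h1 (refl a b) (refl b c) (refl a d) (refl b d)
  exact hTE d c c d c' d' hswap hdc
end

section
/- The axiom sets A and A' are equivalent: the conjunction of RE, TE, IE, SC, FS, IB, Pa holds if and only if the conjunction of TE, IE, SC, FS', IB, Pa holds. -/
theorem stmt_7 (P : Type*) (Btw : P → P → P → Prop) (Cong : P → P → P → P → Prop) :
    ((∀ a b : P, Cong a b b a) ∧
     (∀ a b p q r s, Cong a b p q → Cong a b r s → Cong p q r s) ∧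
     (∀ a b c, Cong a b c c → a = b) ∧
     (∀ a b c q : P, ∃ x, Btw q a x ∧ Cong a x b c) ∧
     (∀ a b c d a' b' c' d', a ≠ b → Btw a b c → Btw a' b' c' →
       Cong a b a' b' → Cong b c b' c' → Cong a d a' d' → Cong b d b' d' →
       Cong c d c' d') ∧
     (∀ a b, Btw a b a → a = b) ∧
     (∀ a b c p q, Btw a p c → Btw b q c → ∃ x, Btw p x b ∧ Btw q x a)) ↔
    ((∀ a b p q r s, Cong a b p q → Cong a b r s → Cong p q r s) ∧
     (∀ a b c, Cong a b c c → a = b) ∧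
     (∀ a b c q : P, ∃ x, Btw q a x ∧ Cong a x b c) ∧
     (∀ a b c d a' b' c' d', a ≠ b → Btw a b c → Btw a' b' c' →
       Cong a b a' b' → Cong b c b' c' → Cong a d a' d' → Cong b d b' d' →
       Cong d c c' d') ∧
     (∀ a b, Btw a b a → a = b) ∧
     (∀ a b c p q, Btw a p c → Btw b q c → ∃ x, Btw p x b ∧ Btw q x a)) := by
  constructor
  · rintro ⟨RE, TE, IE, SC, FS, IB, Pa⟩
    refine ⟨TE, IE, SC, ?_, IB, Pa⟩
    intro a b c d a' b' c' d' hab h1 h2 h3 h4 h5 h6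
    have h := FS a b c d a' b' c' d' hab h1 h2 h3 h4 h5 h6
    exact TE c d d c c' d' (RE c d) h
  · rintro ⟨TE, IE, SC, FS', IB, Pa⟩
    -- reflexivity: Cong a b a b
    have refl : ∀ a b : P, Cong a b a b := by
      intro a b
      obtain ⟨x, _, hc⟩ := SC a a b a
      exact TE a x a b a b hc hc
    -- symmetry of the relation
    have sym : ∀ a b p q : P, Cong a b p q → Cong p q a b := by
      intro a b p q h
      exact TE a b p q a b h (refl a b)
    -- Btw u v v for all u v
    have bvv : ∀ u v : P, Btw u v v := by
      intro u v
      obtain ⟨x, hb, hc⟩ := SC v v v u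
      have : v = x := IE v x v hc
      rwa [← this] at hb
    -- RE : Cong p q q p
    have RE : ∀ p q : P, Cong p q q p := by
      intro p q
      by_cases h : p = q
      · subst h; exact refl p p
      · exact FS' p q q p p q q p h (bvv p q) (bvv p q)
          (refl p q) (refl q q) (refl p p) (refl q p)
    refine ⟨RE, TE, IE, SC, ?_, IB, Pa⟩
    intro a b c d a' b' c' d' hab h1 h2 h3 h4 h5 h6
    have h := FS' a b c d a' b' c' d' hab h1 h2 h3 h4 h5 h6
    -- h : Cong d c c' d', want Cong c d c' d'
    exact TE d c c d c' d' (RE d c) h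
end

section
/- TE is independent in the axiom system CE₂' restricted to its first-order quantifier-free-checkable core: there exists a structure (P, Btw, Cong) satisfying IE, SC, FS', IB, Pa, and Up₂ but not TE. -/
theorem stmt_15 : ∃ (P : Type) (Btw : P → P → P → Prop) (Cong : P → P → P → P → Prop),
    (∀ a b c, Cong a b c c → a = b) ∧
    (∀ a b c q : P, ∃ x, Btw q a x ∧ Cong a x b c) ∧
    (∀ a b c d a' b' c' d', a ≠ b → Btw a b c → Btw a' b' c' →
      Cong a b a' b' → Cong b c b' c' → Cong a d a' d' → Cong b d b' d' →
      Cong d c c' d') ∧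
    (∀ a b, Btw a b a → a = b) ∧
    (∀ a b c p q, Btw a p c → Btw b q c → ∃ x, Btw p x b ∧ Btw q x a) ∧
    (∀ a b c p q, p ≠ q → Cong a p a q → Cong b p b q → Cong c p c q →
      Btw a b c ∨ Btw b c a ∨ Btw c a b) ∧
    ¬ (∀ a b p q r s, Cong a b p q → Cong a b r s → Cong p q r s) := by
  refine ⟨Bool, fun a b c => b = a ∨ b = c, fun a b _ _ => a = b, ?_, ?_, ?_, ?_, ?_, ?_, ?_⟩
  · exact fun a b c h => h
  · exact fun a b c q => ⟨a, Or.inr rfl, rfl⟩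
  · exact fun a b c d a' b' c' d' hab _ _ h1 _ _ _ => absurd h1 hab
  · rintro a b (rfl | rfl) <;> rfl
  · rintro a b c p q h1 h2
    rcases h2 with h2 | h2
    · exact ⟨q, Or.inr h2, Or.inl rfl⟩
    · rcases h1 with h1 | h1
      · exact ⟨p, Or.inl rfl, Or.inr h1⟩
      · exact ⟨q, Or.inl (h2.trans h1.symm), Or.inl rfl⟩
  · rintro a b c p q hpq rfl rfl rfl
    exact Or.inl (Or.inl rfl)
  · intro h
    exact absurd (h true true true false true false rfl rfl) (by decide)
end
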